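/- Let n ≥ 1 and 0 < r_U ≤ r_𝒱. Define T : ℝⁿ → ℝⁿ by T(x) = (r_U/r_𝒱)·x. Then T pushes the uniform measure P_{B(0, r_𝒱)} forward to the uniform measure P_{B(0, r_U)}; the coupling γ obtained as the pushforward of P_{B(0, r_𝒱)} under the map x ↦ (T(x), x) is an optimal coupling for the L²-Wasserstein distance between P_{B(0, r_U)} and P_{B(0, r_𝒱)}; and W₂²(P_{B(0, r_U)}, P_{B(0, r_𝒱)}) = ∫_{B(0, r_𝒱)} ‖x − T(x)‖² dP_{B(0, r_𝒱)}(x) = (n/(n+2)) · (r_𝒱 − r_U)². -/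

import Mathlib

open MeasureTheory Metric Set
open scoped ENNReal NNReal

noncomputable section

/-- The uniform probability measure on a set `S ⊆ ℝⁿ`: Lebesgue measure restricted to `S`
and normalized. -/
def unif {n : ℕ} (S : Set (EuclideanSpace ℝ (Fin n))) : Measure (EuclideanSpace ℝ (Fin n)) :=
  (volume S)⁻¹ • volume.restrict S

/-- The set of couplings of two measures `μ, ν` on `ℝⁿ`: measures on the product whose
marginals are `μ` and `ν`. -/
def couplings {n : ℕ} (μ ν : Measure (EuclideanSpace ℝ (Fin n))) :
    Set (Measure (EuclideanSpace ℝ (Fin n) × EuclideanSpace ℝ (Fin n))) :=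
  {γ | γ.map Prod.fst = μ ∧ γ.map Prod.snd = ν}

/-- The `L²`-Wasserstein distance between two measures on `ℝⁿ` (valued in `ℝ≥0∞`):
the infimum over all couplings `γ` of `(∫ ‖a − b‖² dγ(a, b))^{1/2}`. -/
def W2 {n : ℕ} (μ ν : Measure (EuclideanSpace ℝ (Fin n))) : ℝ≥0∞ :=
  ⨅ γ ∈ couplings μ ν, (∫⁻ w, edist w.1 w.2 ^ 2 ∂γ) ^ (1 / 2 : ℝ)

/-! With `c = r_U / r_𝒱`, Lebesgue measure scales by `cⁿ` under `x ↦ c • x`, so the dilation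
pushes the uniform measure on `B(0, r_𝒱)` to the uniform measure on `B(0, r_U)`.
For any coupling `γ` of `μ` and `ν`, Minkowski's inequality in `L²(γ)` gives
`‖b‖_{L²(ν)} ≤ ‖a‖_{L²(μ)} + ‖a - b‖_{L²(γ)}`, hence `W₂(μ, ν) ≥ ‖id‖_{L²(ν)} - ‖id‖_{L²(μ)}`.
For `μ` the image of `ν` under the dilation, the right side is `(1 - c) ‖id‖_{L²(ν)}`, which is
exactly the cost of the coupling `(c • x, x)`; so that coupling is optimal. The value follows
from the second moment `n / (n + 2) · R²` of the uniform measure on `B(0, R)`, computed in polar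
coordinates. -/

open scoped Pointwise

theorem eLpNorm_two_eq {α ε : Type*} [MeasurableSpace α] [ENorm ε] (f : α → ε)
    (μ : Measure α) : eLpNorm f 2 μ = (∫⁻ x, ‖f x‖ₑ ^ 2 ∂μ) ^ (1 / 2 : ℝ) := by
  simp [eLpNorm_eq_lintegral_rpow_enorm_toReal two_ne_zero ENNReal.ofNat_ne_top]

theorem lintegral_edist_sq_rpow_eq_eLpNorm {E : Type*} [NormedAddCommGroup E]
    [MeasurableSpace E] (γ : Measure (E × E)) :
    (∫⁻ w, edist w.1 w.2 ^ 2 ∂γ) ^ (1 / 2 : ℝ) = eLpNorm (fun w => w.1 - w.2) 2 γ := by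
  simp_rw [eLpNorm_two_eq, edist_eq_enorm_sub]

theorem setIntegral_ball_norm_pow {E : Type*} [NormedAddCommGroup E] [NormedSpace ℝ E]
    [FiniteDimensional ℝ E] [MeasurableSpace E] [BorelSpace E] [Nontrivial E]
    (μ : Measure E) [μ.IsAddHaarMeasure] (k : ℕ) {R : ℝ} (hR : 0 ≤ R) :
    ∫ x in ball (0 : E) R, ‖x‖ ^ k ∂μ =
      (Module.finrank ℝ E / (Module.finrank ℝ E + k) : ℝ) * R ^ k * μ.real (ball 0 R) := by
  have h_indicator : ∫ x in ball (0 : E) R, ‖x‖ ^ k ∂μ =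
      ∫ x, (Iio R).indicator (· ^ k) ‖x‖ ∂μ := by
    rw [← integral_indicator measurableSet_ball]
    congr 1 with x
    simp [indicator]
  rw [h_indicator, integral_fun_norm_addHaar, Measure.real, Measure.real, μ.addHaar_ball _ hR,
    ENNReal.toReal_mul, ENNReal.toReal_ofReal (by positivity)]
  have hd : 0 < Module.finrank ℝ E := Module.finrank_pos
  generalize Module.finrank ℝ E = d at hd ⊢
  have h_radial : ∫ y in Ioi (0 : ℝ), y ^ (d - 1) • (Iio R).indicator (· ^ k) y =
      R ^ (d + k) / (d + k) := by
    have h_pow : ∀ y ∈ uIcc 0 R, y ^ (d - 1) * y ^ k = y ^ (d + k - 1) := fun y _ => by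
      rw [← pow_add]; congr 1; omega
    have h_ind : (fun y : ℝ => y ^ (d - 1) • (Iio R).indicator (· ^ k) y) =
        (Iio R).indicator (fun y => y ^ (d - 1) * y ^ k) := by
      ext y; simp [indicator]
    rw [h_ind, integral_indicator measurableSet_Iio, Measure.restrict_restrict measurableSet_Iio,
      Iio_inter_Ioi, ← integral_Ioc_eq_integral_Ioo, ← intervalIntegral.integral_of_le hR,
      intervalIntegral.integral_congr h_pow, integral_pow, Nat.sub_add_cancel (by omega),
      zero_pow (by omega), sub_zero, Nat.cast_sub (by omega)]
    push_cast
    ring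
  have hdk : (d : ℝ) + k ≠ 0 := by positivity
  rw [h_radial, nsmul_eq_mul, smul_eq_mul]
  field_simp
  ring

section Dilation

variable {E : Type*} [NormedAddCommGroup E] [NormedSpace ℝ E] [MeasurableSpace E]

theorem lintegral_edist_smul_pow (c : ℝ) (k : ℕ) (ν : Measure E) :
    ∫⁻ x, edist x (c • x) ^ k ∂ν = ‖1 - c‖ₑ ^ k * ∫⁻ x, ‖x‖ₑ ^ k ∂ν := by
  have h_sub : ∀ x : E, x - c • x = (1 - c) • x := fun x => by rw [sub_smul, one_smul]
  simp_rw [edist_eq_enorm_sub, h_sub, enorm_smul, mul_pow]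
  exact lintegral_const_mul' _ _ (by simp)

variable [BorelSpace E] [SecondCountableTopology E]

theorem eLpNorm_id_map_smul (c : ℝ) (p : ℝ≥0∞) (ν : Measure E) :
    eLpNorm id p (ν.map (c • ·)) = ‖c‖ₑ * eLpNorm id p ν := by
  rw [eLpNorm_map_measure (by fun_prop) (by fun_prop)]
  exact eLpNorm_const_smul c id p ν

theorem eLpNorm_sub_map_smul_prodMk (c : ℝ) (p : ℝ≥0∞) (ν : Measure E) :
    eLpNorm (fun w : E × E => w.1 - w.2) p (ν.map fun x => (c • x, x)) =
      ‖c - 1‖ₑ * eLpNorm id p ν := by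
  rw [eLpNorm_map_measure (by fun_prop) (by fun_prop), ← eLpNorm_const_smul]
  congr 1 with x
  simp [sub_smul]

end Dilation

section EuclideanSpace

variable {n : ℕ}

theorem map_smul_unif {c : ℝ} (hc : c ≠ 0) (S : Set (EuclideanSpace ℝ (Fin n))) :
    (unif S).map (c • ·) = unif (c • S) := by
  let e := (Homeomorph.smulOfNeZero c hc : EuclideanSpace ℝ (Fin n) ≃ₜ _).toMeasurableEquiv
  have h_restrict : (volume.restrict S).map (c • ·) =
      ENNReal.ofReal |(c ^ Module.finrank ℝ (EuclideanSpace ℝ (Fin n)))⁻¹| •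
        volume.restrict (c • S) := by
    rw [← Measure.restrict_smul, ← Measure.map_addHaar_smul _ hc]
    exact ((e.restrict_map volume (c • S)).trans (by simp [e, preimage_smul₀ hc, hc])).symm
  rw [unif, unif, Measure.map_smul, h_restrict, smul_smul, Measure.addHaar_smul,
    ENNReal.mul_inv (by simp [hc]) (by simp), abs_inv, ENNReal.ofReal_inv_of_pos (by positivity),
    mul_comm]

theorem lintegral_enorm_pow_unif_ball [NeZero n] (k : ℕ) {R : ℝ} (hR : 0 < R) :
    ∫⁻ x, ‖x‖ₑ ^ k ∂unif (ball (0 : EuclideanSpace ℝ (Fin n)) R) =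
      ENNReal.ofReal (n / (n + k) * R ^ k) := by
  have h_int : IntegrableOn (fun x : EuclideanSpace ℝ (Fin n) => ‖x‖ ^ k) (ball 0 R) :=
    ((continuous_norm.pow k).locallyIntegrable.integrableOn_isCompact
      (isCompact_closedBall 0 R)).mono_set ball_subset_closedBall
  have h_vol_ne_zero : volume (ball (0 : EuclideanSpace ℝ (Fin n)) R) ≠ 0 :=
    (measure_ball_pos volume _ hR).ne'
  have h_vol_ne_top : volume (ball (0 : EuclideanSpace ℝ (Fin n)) R) ≠ ∞ :=
    measure_ball_lt_top.ne
  simp_rw [← ofReal_norm, ← ENNReal.ofReal_pow (norm_nonneg _)]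
  rw [unif, lintegral_smul_measure,
    ← ofReal_integral_eq_lintegral_ofReal h_int (ae_of_all _ fun x => by positivity),
    setIntegral_ball_norm_pow _ k hR.le, finrank_euclideanSpace_fin,
    ENNReal.ofReal_mul (by positivity), Measure.real, ENNReal.ofReal_toReal h_vol_ne_top,
    smul_eq_mul, mul_comm, mul_assoc, ENNReal.mul_inv_cancel h_vol_ne_zero h_vol_ne_top, mul_one]

theorem map_prodMk_mem_couplings {T : EuclideanSpace ℝ (Fin n) → EuclideanSpace ℝ (Fin n)}
    (hT : Measurable T) (ν : Measure (EuclideanSpace ℝ (Fin n))) :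
    ν.map (fun x => (T x, x)) ∈ couplings (ν.map T) ν := by
  have h_graph : Measurable fun x => (T x, x) := hT.prodMk measurable_id
  exact ⟨by rw [Measure.map_map measurable_fst h_graph]; rfl,
    by rw [Measure.map_map measurable_snd h_graph]; exact Measure.map_id⟩

theorem eLpNorm_id_tsub_le_W2 (μ ν : Measure (EuclideanSpace ℝ (Fin n))) :
    eLpNorm id 2 ν - eLpNorm id 2 μ ≤ W2 μ ν := by
  refine le_iInf₂ fun γ ⟨hγμ, hγν⟩ => ?_
  rw [lintegral_edist_sq_rpow_eq_eLpNorm, tsub_le_iff_left, ← hγμ, ← hγν,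
    eLpNorm_map_measure (by fun_prop) (by fun_prop),
    eLpNorm_map_measure (by fun_prop) (by fun_prop)]
  calc eLpNorm (id ∘ Prod.snd) 2 γ = eLpNorm (Prod.fst - fun w => w.1 - w.2) 2 γ := by
        congr 1 with w
        simp
    _ ≤ _ := eLpNorm_sub_le (by fun_prop) (by fun_prop) one_le_two

theorem W2_map_smul_eq_cost {c : ℝ} (hc0 : 0 ≤ c) (hc1 : c ≤ 1)
    {ν : Measure (EuclideanSpace ℝ (Fin n))} (hν : eLpNorm id 2 ν ≠ ∞) :
    W2 (ν.map (c • ·)) ν = (∫⁻ w, edist w.1 w.2 ^ 2 ∂ν.map fun x => (c • x, x)) ^ (1 / 2 : ℝ) := by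
  refine le_antisymm (iInf₂_le _ (map_prodMk_mem_couplings (measurable_const_smul c) ν)) ?_
  calc _ = ‖c - 1‖ₑ * eLpNorm id 2 ν := by
        rw [lintegral_edist_sq_rpow_eq_eLpNorm, eLpNorm_sub_map_smul_prodMk]
    _ = eLpNorm id 2 ν - ‖c‖ₑ * eLpNorm id 2 ν := by
        rw [Real.enorm_eq_ofReal_abs, Real.enorm_eq_ofReal_abs, abs_sub_comm,
          abs_of_nonneg (sub_nonneg.2 hc1), abs_of_nonneg hc0, ENNReal.ofReal_sub _ hc0,
          ENNReal.ofReal_one, ENNReal.sub_mul (fun _ _ => hν), one_mul]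
    _ = eLpNorm id 2 ν - eLpNorm id 2 (ν.map (c • ·)) := by rw [eLpNorm_id_map_smul]
    _ ≤ W2 _ _ := eLpNorm_id_tsub_le_W2 _ _

end EuclideanSpace

/-- **The dilation is an optimal transport map between concentric balls.**
Let `0 < r_U ≤ r_𝒱` and `T x = (r_U/r_𝒱)·x`. Then `T` pushes the uniform measure on
`B(0, r_𝒱)` forward to the uniform measure on `B(0, r_U)`; the coupling
`(T x, x)_* P_{B(0, r_𝒱)}` is an optimal coupling for `W₂`; and
`W₂²(P_{B(0,r_U)}, P_{B(0,r_𝒱)}) = ∫ ‖x − T x‖² dP_{B(0,r_𝒱)}(x) = (n/(n+2))·(r_𝒱 − r_U)²`. -/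
theorem dilation_optimal_transport_balls (n : ℕ) (hn : 1 ≤ n) (rU rV : ℝ)
    (hrU : 0 < rU) (hrUV : rU ≤ rV)
    (T : EuclideanSpace ℝ (Fin n) → EuclideanSpace ℝ (Fin n))
    (hT : T = fun x => (rU / rV) • x) :
    Measure.map T (unif (ball (0 : EuclideanSpace ℝ (Fin n)) rV)) =
      unif (ball (0 : EuclideanSpace ℝ (Fin n)) rU) ∧
    (Measure.map (fun x => (T x, x)) (unif (ball (0 : EuclideanSpace ℝ (Fin n)) rV)) ∈
        couplings (unif (ball (0 : EuclideanSpace ℝ (Fin n)) rU))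
          (unif (ball (0 : EuclideanSpace ℝ (Fin n)) rV)) ∧
      (∫⁻ w, edist w.1 w.2 ^ 2
          ∂(Measure.map (fun x => (T x, x))
            (unif (ball (0 : EuclideanSpace ℝ (Fin n)) rV)))) ^ (1 / 2 : ℝ) =
        W2 (unif (ball (0 : EuclideanSpace ℝ (Fin n)) rU))
          (unif (ball (0 : EuclideanSpace ℝ (Fin n)) rV))) ∧
    (W2 (unif (ball (0 : EuclideanSpace ℝ (Fin n)) rU))
          (unif (ball (0 : EuclideanSpace ℝ (Fin n)) rV))) ^ 2 =
        ∫⁻ x, edist x (T x) ^ 2 ∂(unif (ball (0 : EuclideanSpace ℝ (Fin n)) rV)) ∧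
    (W2 (unif (ball (0 : EuclideanSpace ℝ (Fin n)) rU))
          (unif (ball (0 : EuclideanSpace ℝ (Fin n)) rV))) ^ 2 =
        ENNReal.ofReal ((n / (n + 2) : ℝ) * (rV - rU) ^ 2) := by
  subst hT
  beta_reduce
  have : NeZero n := ⟨by omega⟩
  have hrV : 0 < rV := hrU.trans_le hrUV
  set c := rU / rV
  have hc0 : 0 < c := div_pos hrU hrV
  set μ := unif (ball (0 : EuclideanSpace ℝ (Fin n)) rU)
  set ν := unif (ball (0 : EuclideanSpace ℝ (Fin n)) rV)
  have h_push : ν.map (c • ·) = μ := by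
    rw [map_smul_unif hc0.ne', _root_.smul_ball hc0.ne', smul_zero, Real.norm_of_nonneg hc0.le,
      div_mul_cancel₀ _ hrV.ne']
  have h_moment : ∫⁻ x, ‖x‖ₑ ^ 2 ∂ν = ENNReal.ofReal (n / (n + 2) * rV ^ 2) := by
    exact_mod_cast lintegral_enorm_pow_unif_ball 2 hrV
  have h_opt : W2 μ ν = (∫⁻ w, edist w.1 w.2 ^ 2 ∂ν.map fun x => (c • x, x)) ^ (1 / 2 : ℝ) := by
    refine h_push ▸ W2_map_smul_eq_cost hc0.le ((div_le_one hrV).2 hrUV) ?_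
    simp only [eLpNorm_two_eq, id_eq, h_moment]
    exact ENNReal.rpow_ne_top_of_nonneg (by norm_num) ENNReal.ofReal_ne_top
  have h_W2_sq : W2 μ ν ^ 2 = ∫⁻ x, edist x (c • x) ^ 2 ∂ν := by
    rw [h_opt, lintegral_map (by fun_prop) (by fun_prop), one_div,
      ← ENNReal.rpow_natCast, ← ENNReal.rpow_mul]
    simp [edist_comm]
  refine ⟨h_push, ⟨h_push ▸ map_prodMk_mem_couplings (measurable_const_smul c) ν, h_opt.symm⟩,
    h_W2_sq, ?_⟩
  rw [h_W2_sq, lintegral_edist_smul_pow, h_moment, Real.enorm_eq_ofReal_abs,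
    ← ENNReal.ofReal_pow (abs_nonneg _), ← ENNReal.ofReal_mul (by positivity), sq_abs]
  congr 1
  simp only [c]
  field_simp
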